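/- Let L₁, L₂, L₃ be complete lattices, f monotone on their product with components f₁, f₂, f₃, and (a₁,a₂,a₃) the least fixed point of f. Then a₂ ≥ μy. f₂(a₁, y, μz. f₃(a₁, y, z)) and a₃ ≥ μz. f₃(a₁, μy. f₂(a₁,y,z), z). -/
import Mathlib


/-- Least fixed point of `g` (Knaster-Tarski for monotone `g`). -/
def lfp {α : Type*} [CompleteLattice α] (g : α → α) : α := sInf {x | g x ≤ x}

lemma lfp_le' {α : Type*} [CompleteLattice α] {g : α → α} {x : α} (hx : g x ≤ x) :
    lfp g ≤ x := sInf_le hx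

lemma lfp_fixed {α : Type*} [CompleteLattice α] {g : α → α} (hg : Monotone g) :
    g (lfp g) = lfp g := by
  have h1 : g (lfp g) ≤ lfp g := by
    apply le_sInf
    intro x hx
    exact le_trans (hg (lfp_le' hx)) hx
  exact le_antisymm h1 (lfp_le' (hg h1))

theorem lfp_triple_ge {L₁ L₂ L₃ : Type*} [CompleteLattice L₁] [CompleteLattice L₂]
    [CompleteLattice L₃]
    (f : L₁ × L₂ × L₃ → L₁ × L₂ × L₃) (hf : Monotone f)
    (a₁ : L₁) (a₂ : L₂) (a₃ : L₃) (h : lfp f = (a₁, a₂, a₃)) :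
    lfp (fun y => (f (a₁, y, lfp (fun z => (f (a₁, y, z)).2.2))).2.1) ≤ a₂ ∧
    lfp (fun z => (f (a₁, lfp (fun y => (f (a₁, y, z)).2.1), z)).2.2) ≤ a₃ := by
  have hfix : f (a₁, a₂, a₃) = (a₁, a₂, a₃) := by
    rw [← h]; exact lfp_fixed hf
  have hmono : ∀ y y' z z', y ≤ y' → z ≤ z' →
      f (a₁, y, z) ≤ f (a₁, y', z') := fun y y' z z' hy hz =>
    hf ⟨le_refl _, hy, hz⟩
  constructor
  · apply lfp_le'
    have hinner : lfp (fun z => (f (a₁, a₂, z)).2.2) ≤ a₃ := by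
      apply lfp_le'
      show (f (a₁, a₂, a₃)).2.2 ≤ a₃
      rw [hfix]
    calc (f (a₁, a₂, lfp (fun z => (f (a₁, a₂, z)).2.2))).2.1
        ≤ (f (a₁, a₂, a₃)).2.1 := (hmono _ _ _ _ le_rfl hinner).2.1
      _ = a₂ := by rw [hfix]
  · apply lfp_le'
    have hinner : lfp (fun y => (f (a₁, y, a₃)).2.1) ≤ a₂ := by
      apply lfp_le'
      show (f (a₁, a₂, a₃)).2.1 ≤ a₂
      rw [hfix]
    calc (f (a₁, lfp (fun y => (f (a₁, y, a₃)).2.1), a₃)).2.2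
        ≤ (f (a₁, a₂, a₃)).2.2 := (hmono _ _ _ _ hinner le_rfl).2.2
      _ = a₃ := by rw [hfix]
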